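/- Let u, v, s : ℝ³ → ℝ be smooth functions of (t, x, y) and let λ ∈ ℝ. Suppose that at every point s_t = J(u, s) + Δv + λ·E(u) and 0 = J(v, s) + Δu + λ·E(v). Then at every point G1 + J(G2, s) + λ·E(G2) = 0, where G1 := (Δu)_t − J(u, Δu) + J(v, Δv) and G2 := v_t − J(u, v). Hence this system is a Lax representation for the two-dimensional ideal magnetohydrodynamics equations. -/

import Mathlib

noncomputable section

/-- Partial derivative in `t` of a function of `(t, x, y)`. -/
def pt3 (f : ℝ × ℝ × ℝ → ℝ) (P : ℝ × ℝ × ℝ) : ℝ :=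
  deriv (fun w => f (w, P.2.1, P.2.2)) P.1

/-- Partial derivative in `x` of a function of `(t, x, y)`. -/
def px3 (f : ℝ × ℝ × ℝ → ℝ) (P : ℝ × ℝ × ℝ) : ℝ :=
  deriv (fun w => f (P.1, w, P.2.2)) P.2.1

/-- Partial derivative in `y` of a function of `(t, x, y)`. -/
def py3 (f : ℝ × ℝ × ℝ → ℝ) (P : ℝ × ℝ × ℝ) : ℝ :=
  deriv (fun w => f (P.1, P.2.1, w)) P.2.2

/-- Jacobi bracket `J(f, g) = f_x g_y - f_y g_x`. -/
def J3 (f g : ℝ × ℝ × ℝ → ℝ) : ℝ × ℝ × ℝ → ℝ :=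
  fun P => px3 f P * py3 g P - py3 f P * px3 g P

/-- Planar Laplacian `Δf = f_xx + f_yy`. -/
def lap3 (f : ℝ × ℝ × ℝ → ℝ) : ℝ × ℝ × ℝ → ℝ :=
  fun P => px3 (px3 f) P + py3 (py3 f) P

/-- The operator `E(f) = x f_x + y f_y - 2 f`. -/
def Eop3 (f : ℝ × ℝ × ℝ → ℝ) : ℝ × ℝ × ℝ → ℝ :=
  fun P => P.2.1 * px3 f P + P.2.2 * py3 f P - 2 * f P

/-- `G1 = (Δu)_t - J(u, Δu) + J(v, Δv)`. -/
def G1 (u v : ℝ × ℝ × ℝ → ℝ) : ℝ × ℝ × ℝ → ℝ :=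
  fun P => pt3 (lap3 u) P - J3 u (lap3 u) P + J3 v (lap3 v) P

/-- `G2 = v_t - J(u, v)`. -/
def G2 (u v : ℝ × ℝ × ℝ → ℝ) : ℝ × ℝ × ℝ → ℝ :=
  fun P => pt3 v P - J3 u v P

namespace IMHDaux

abbrev P3 := ℝ × ℝ × ℝ

/-- Directional derivative operator. -/
def Dv (a : P3) (f : P3 → ℝ) : P3 → ℝ := fun P => fderiv ℝ f P a

def e1 : P3 := (1,0,0)
def e2 : P3 := (0,1,0)
def e3 : P3 := (0,0,1)

lemma contDiff_Dv {f : P3 → ℝ} (hf : ContDiff ℝ (⊤ : ℕ∞) f) (a : P3) : ContDiff ℝ (⊤ : ℕ∞) (Dv a f) :=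
  (hf.fderiv_right (by simp)).clm_apply contDiff_const

lemma diff_Dv {f : P3 → ℝ} (hf : ContDiff ℝ (⊤ : ℕ∞) f) (a : P3) (P : P3) :
    DifferentiableAt ℝ (Dv a f) P :=
  (contDiff_Dv hf a).differentiable (by simp) P

lemma Dv_comm {f : P3 → ℝ} (hf : ContDiff ℝ (⊤ : ℕ∞) f) (a b : P3) (P : P3) :
    Dv a (Dv b f) P = Dv b (Dv a f) P := by
  have hd : Differentiable ℝ f := hf.differentiable (by simp)
  have hd1 : DifferentiableAt ℝ (fderiv ℝ f) P :=
    ((hf.fderiv_right (m := (⊤ : ℕ∞)) (by simp)).differentiable (by simp)) P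
  have expand : ∀ c d : P3, fderiv ℝ (fun Q => fderiv ℝ f Q d) P c
      = fderiv ℝ (fderiv ℝ f) P c d := by
    intro c d
    rw [fderiv_clm_apply hd1 (differentiableAt_const d)]
    simp
  show fderiv ℝ (fun Q => fderiv ℝ f Q b) P a = fderiv ℝ (fun Q => fderiv ℝ f Q a) P b
  rw [expand a b, expand b a]
  exact second_derivative_symmetric (fun y => (hd y).hasFDerivAt) hd1.hasFDerivAt a b

variable {f g h k : P3 → ℝ} {a b : P3} {P : P3} {c : ℝ}

lemma Dv_add (hf : DifferentiableAt ℝ f P) (hg : DifferentiableAt ℝ g P) :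
    Dv a (fun Q => f Q + g Q) P = Dv a f P + Dv a g P := by
  simp [Dv, fderiv_fun_add hf hg]

lemma Dv_neg : Dv a (fun Q => -f Q) P = -Dv a f P := by
  simp [Dv, fderiv_neg]

lemma Dv_sub (hf : DifferentiableAt ℝ f P) (hg : DifferentiableAt ℝ g P) :
    Dv a (fun Q => f Q - g Q) P = Dv a f P - Dv a g P := by
  simp [Dv, fderiv_fun_sub hf hg]

lemma Dv_const_mul (hf : DifferentiableAt ℝ f P) :
    Dv a (fun Q => c * f Q) P = c * Dv a f P := by
  simp [Dv, fderiv_const_mul hf]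

lemma Dv_mul (hf : DifferentiableAt ℝ f P) (hg : DifferentiableAt ℝ g P) :
    Dv a (fun Q => f Q * g Q) P = Dv a f P * g P + f P * Dv a g P := by
  simp only [Dv, fderiv_fun_mul hf hg]
  simp [mul_comm]
  ring

lemma Dv_X : Dv a (fun Q : P3 => Q.2.1) P = a.2.1 := by
  have h1 : (fun Q : P3 => Q.2.1)
      = fun Q => ((ContinuousLinearMap.fst ℝ ℝ ℝ).comp (ContinuousLinearMap.snd ℝ ℝ (ℝ × ℝ))) Q := rfl
  rw [Dv, h1, ContinuousLinearMap.fderiv]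
  rfl

lemma Dv_Y : Dv a (fun Q : P3 => Q.2.2) P = a.2.2 := by
  have h1 : (fun Q : P3 => Q.2.2)
      = fun Q => ((ContinuousLinearMap.snd ℝ ℝ ℝ).comp (ContinuousLinearMap.snd ℝ ℝ (ℝ × ℝ))) Q := rfl
  rw [Dv, h1, ContinuousLinearMap.fderiv]
  rfl

/-- `Dv`-level Jacobi bracket. -/
def JD (f g : P3 → ℝ) : P3 → ℝ :=
  fun P => Dv e2 f P * Dv e3 g P - Dv e3 f P * Dv e2 g P

/-- `Dv`-level scaling operator. -/
def ED (f : P3 → ℝ) : P3 → ℝ :=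
  fun P => P.2.1 * Dv e2 f P + P.2.2 * Dv e3 f P - 2 * f P

/-- `Dv`-level Laplacian. -/
def LD (f : P3 → ℝ) : P3 → ℝ :=
  fun P => Dv e2 (Dv e2 f) P + Dv e3 (Dv e3 f) P

lemma contDiff_JD (hf : ContDiff ℝ (⊤ : ℕ∞) f) (hg : ContDiff ℝ (⊤ : ℕ∞) g) : ContDiff ℝ (⊤ : ℕ∞) (JD f g) :=
  ((contDiff_Dv hf e2).mul (contDiff_Dv hg e3)).sub
    ((contDiff_Dv hf e3).mul (contDiff_Dv hg e2))

lemma contDiff_ED (hf : ContDiff ℝ (⊤ : ℕ∞) f) : ContDiff ℝ (⊤ : ℕ∞) (ED f) :=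
  ((contDiff_snd.fst.mul (contDiff_Dv hf e2)).add
    (contDiff_snd.snd.mul (contDiff_Dv hf e3))).sub (contDiff_const.mul hf)

lemma contDiff_LD (hf : ContDiff ℝ (⊤ : ℕ∞) f) : ContDiff ℝ (⊤ : ℕ∞) (LD f) :=
  (contDiff_Dv (contDiff_Dv hf e2) e2).add (contDiff_Dv (contDiff_Dv hf e3) e3)

section conversions

lemma pt3_eq (hf : ContDiff ℝ (⊤ : ℕ∞) f) : pt3 f = Dv e1 f := by
  funext P
  have hg : HasDerivAt (fun w : ℝ => ((w, P.2.1, P.2.2) : P3)) e1 P.1 :=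
    (hasDerivAt_id' (x := P.1)).prodMk
      ((hasDerivAt_const P.1 P.2.1).prodMk (hasDerivAt_const P.1 P.2.2))
  have hfd : HasFDerivAt f (fderiv ℝ f P) ((fun w : ℝ => ((w, P.2.1, P.2.2) : P3)) P.1) := by
    simpa using (hf.differentiable (by simp) P).hasFDerivAt
  have := (hfd.comp_hasDerivAt P.1 hg).deriv
  simpa [pt3, Dv, Function.comp_def] using this

lemma px3_eq (hf : ContDiff ℝ (⊤ : ℕ∞) f) : px3 f = Dv e2 f := by
  funext P
  have hg : HasDerivAt (fun w : ℝ => ((P.1, w, P.2.2) : P3)) e2 P.2.1 :=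
    (hasDerivAt_const P.2.1 P.1).prodMk
      ((hasDerivAt_id' (x := P.2.1)).prodMk (hasDerivAt_const P.2.1 P.2.2))
  have hfd : HasFDerivAt f (fderiv ℝ f P) ((fun w : ℝ => ((P.1, w, P.2.2) : P3)) P.2.1) := by
    simpa using (hf.differentiable (by simp) P).hasFDerivAt
  have := (hfd.comp_hasDerivAt P.2.1 hg).deriv
  simpa [px3, Dv, Function.comp_def] using this

lemma py3_eq (hf : ContDiff ℝ (⊤ : ℕ∞) f) : py3 f = Dv e3 f := by
  funext P
  have hg : HasDerivAt (fun w : ℝ => ((P.1, P.2.1, w) : P3)) e3 P.2.2 :=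
    (hasDerivAt_const P.2.2 P.1).prodMk
      ((hasDerivAt_const P.2.2 P.2.1).prodMk (hasDerivAt_id' (x := P.2.2)))
  have hfd : HasFDerivAt f (fderiv ℝ f P) ((fun w : ℝ => ((P.1, P.2.1, w) : P3)) P.2.2) := by
    simpa using (hf.differentiable (by simp) P).hasFDerivAt
  have := (hfd.comp_hasDerivAt P.2.2 hg).deriv
  simpa [py3, Dv, Function.comp_def] using this

lemma J3_eq (hf : ContDiff ℝ (⊤ : ℕ∞) f) (hg : ContDiff ℝ (⊤ : ℕ∞) g) : J3 f g = JD f g := by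
  funext P
  simp only [J3, JD, px3_eq hf, py3_eq hf, px3_eq hg, py3_eq hg]

lemma lap3_eq (hf : ContDiff ℝ (⊤ : ℕ∞) f) : lap3 f = LD f := by
  funext P
  simp only [lap3, LD, px3_eq hf, py3_eq hf, px3_eq (contDiff_Dv hf e2),
    py3_eq (contDiff_Dv hf e3)]

lemma Eop3_eq (hf : ContDiff ℝ (⊤ : ℕ∞) f) : Eop3 f = ED f := by
  funext P
  simp only [Eop3, ED, px3_eq hf, py3_eq hf]

end conversions

section structural

/-- `Dv` is a derivation for the Jacobi bracket (uses Clairaut). -/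
lemma Dv_JD (hf : ContDiff ℝ (⊤ : ℕ∞) f) (hg : ContDiff ℝ (⊤ : ℕ∞) g) (a : P3) (P : P3) :
    Dv a (JD f g) P = JD (Dv a f) g P + JD f (Dv a g) P := by
  have d2f := (diff_Dv hf e2 P).hasFDerivAt
  have d3f := (diff_Dv hf e3 P).hasFDerivAt
  have d2g := (diff_Dv hg e2 P).hasFDerivAt
  have d3g := (diff_Dv hg e3 P).hasFDerivAt
  have H := (d2f.mul d3g).sub (d3f.mul d2g)
  have hJ : Dv a (JD f g) P
      = ((Dv e2 f P • fderiv ℝ (Dv e3 g) P + Dv e3 g P • fderiv ℝ (Dv e2 f) P)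
        - (Dv e3 f P • fderiv ℝ (Dv e2 g) P + Dv e2 g P • fderiv ℝ (Dv e3 f) P)) a := by
    show fderiv ℝ (fun Q => Dv e2 f Q * Dv e3 g Q - Dv e3 f Q * Dv e2 g Q) P a = _
    rw [← H.fderiv]; rfl
  rw [hJ]
  simp only [ContinuousLinearMap.coe_sub', Pi.sub_apply, ContinuousLinearMap.add_apply,
    ContinuousLinearMap.coe_smul', Pi.smul_apply, smul_eq_mul]
  have c2g : fderiv ℝ (Dv e3 g) P a = Dv e3 (Dv a g) P := Dv_comm hg a e3 P
  have c1f : fderiv ℝ (Dv e2 f) P a = Dv e2 (Dv a f) P := Dv_comm hf a e2 P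
  have c1g : fderiv ℝ (Dv e2 g) P a = Dv e2 (Dv a g) P := Dv_comm hg a e2 P
  have c2f : fderiv ℝ (Dv e3 f) P a = Dv e3 (Dv a f) P := Dv_comm hf a e3 P
  rw [c2g, c1f, c1g, c2f]
  simp only [JD]
  ring
lemma Dv_ED (hf : ContDiff ℝ (⊤ : ℕ∞) f) (a : P3) (P : P3) :
    Dv a (ED f) P = ED (Dv a f) P + a.2.1 * Dv e2 f P + a.2.2 * Dv e3 f P := by
  have d2f := (diff_Dv hf e2 P).hasFDerivAt
  have d3f := (diff_Dv hf e3 P).hasFDerivAt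
  have dfP := ((hf.differentiable (by simp)) P).hasFDerivAt
  have dX : HasFDerivAt (fun Q : P3 => Q.2.1)
      ((ContinuousLinearMap.fst ℝ ℝ ℝ).comp (ContinuousLinearMap.snd ℝ ℝ (ℝ × ℝ))) P :=
    by exact ((ContinuousLinearMap.fst ℝ ℝ ℝ).comp
      (ContinuousLinearMap.snd ℝ ℝ (ℝ × ℝ))).hasFDerivAt
  have dY : HasFDerivAt (fun Q : P3 => Q.2.2)
      ((ContinuousLinearMap.snd ℝ ℝ ℝ).comp (ContinuousLinearMap.snd ℝ ℝ (ℝ × ℝ))) P :=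
    by exact ((ContinuousLinearMap.snd ℝ ℝ ℝ).comp
      (ContinuousLinearMap.snd ℝ ℝ (ℝ × ℝ))).hasFDerivAt
  have H := ((dX.mul d2f).add (dY.mul d3f)).sub (dfP.const_mul 2)
  have hE : Dv a (ED f) P
      = (((P.2.1 • fderiv ℝ (Dv e2 f) P
            + Dv e2 f P • ((ContinuousLinearMap.fst ℝ ℝ ℝ).comp (ContinuousLinearMap.snd ℝ ℝ (ℝ × ℝ))))
          + (P.2.2 • fderiv ℝ (Dv e3 f) P
            + Dv e3 f P • ((ContinuousLinearMap.snd ℝ ℝ ℝ).comp (ContinuousLinearMap.snd ℝ ℝ (ℝ × ℝ)))))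
         - (2 : ℝ) • fderiv ℝ f P) a := by
    show fderiv ℝ (fun Q : P3 => Q.2.1 * Dv e2 f Q + Q.2.2 * Dv e3 f Q - 2 * f Q) P a = _
    rw [← H.fderiv]; rfl
  rw [hE]
  simp only [ContinuousLinearMap.coe_sub', Pi.sub_apply, ContinuousLinearMap.add_apply,
    ContinuousLinearMap.coe_smul', Pi.smul_apply, smul_eq_mul,
    ContinuousLinearMap.coe_comp', Function.comp_apply, ContinuousLinearMap.coe_fst',
    ContinuousLinearMap.coe_snd']
  have c1 : fderiv ℝ (Dv e2 f) P a = Dv e2 (Dv a f) P := Dv_comm hf a e2 P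
  have c2 : fderiv ℝ (Dv e3 f) P a = Dv e3 (Dv a f) P := Dv_comm hf a e3 P
  have c3 : fderiv ℝ f P a = Dv a f P := rfl
  rw [c1, c2, c3]
  simp only [ED]
  ring
lemma Dv_e1_ED (hf : ContDiff ℝ (⊤ : ℕ∞) f) (P : P3) :
    Dv e1 (ED f) P = ED (Dv e1 f) P := by
  rw [Dv_ED hf e1 P]
  simp [e1]

/-- Jacobi identity for the bracket. -/
lemma jacobiJD (hf : ContDiff ℝ (⊤ : ℕ∞) f) (hg : ContDiff ℝ (⊤ : ℕ∞) g) (hh : ContDiff ℝ (⊤ : ℕ∞) h) (P : P3) :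
    JD f (JD g h) P + JD g (JD h f) P + JD h (JD f g) P = 0 := by
  have E1 := Dv_JD hg hh e2 P
  have E2 := Dv_JD hg hh e3 P
  have E3 := Dv_JD hh hf e2 P
  have E4 := Dv_JD hh hf e3 P
  have E5 := Dv_JD hf hg e2 P
  have E6 := Dv_JD hf hg e3 P
  simp only [JD] at E1 E2 E3 E4 E5 E6 ⊢
  rw [E1, E2, E3, E4, E5, E6, Dv_comm hf e3 e2 P, Dv_comm hg e3 e2 P, Dv_comm hh e3 e2 P]
  ring

/-- The `E`–`J` compatibility identity. -/
lemma ED_JD (hf : ContDiff ℝ (⊤ : ℕ∞) f) (hg : ContDiff ℝ (⊤ : ℕ∞) g) (P : P3) :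
    ED (JD f g) P = JD (ED f) g P + JD f (ED g) P := by
  have E1 := Dv_JD hf hg e2 P
  have E2 := Dv_JD hf hg e3 P
  have E3 := Dv_ED hf e2 P
  have E4 := Dv_ED hf e3 P
  have E5 := Dv_ED hg e2 P
  have E6 := Dv_ED hg e3 P
  simp only [JD, ED] at E1 E2 E3 E4 E5 E6 ⊢
  rw [E1, E2, E3, E4, E5, E6, Dv_comm hf e3 e2 P, Dv_comm hg e3 e2 P]
  simp only [e2, e3]
  ring

lemma JD_antisymm : JD f g P = -JD g f P := by
  simp only [JD]; ring

/-- Linearity of `JD` in the second slot for the shape coming from `hst`. -/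
lemma Dv_lin3 (hg : DifferentiableAt ℝ g P) (hh : DifferentiableAt ℝ h P)
    (hk : DifferentiableAt ℝ k P) (a : P3) :
    Dv a (fun Q => g Q + h Q + c * k Q) P = Dv a g P + Dv a h P + c * Dv a k P := by
  have H := (hg.hasFDerivAt.add hh.hasFDerivAt).add (hk.hasFDerivAt.const_mul c)
  have hE : Dv a (fun Q => g Q + h Q + c * k Q) P
      = ((fderiv ℝ g P + fderiv ℝ h P) + c • fderiv ℝ k P) a := by
    show fderiv ℝ (fun Q => g Q + h Q + c * k Q) P a = _
    rw [← H.fderiv]; rfl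
  rw [hE]
  simp only [ContinuousLinearMap.add_apply, ContinuousLinearMap.coe_smul', Pi.smul_apply,
    smul_eq_mul]
  rfl

lemma JD_lin3 (hg : DifferentiableAt ℝ g P) (hh : DifferentiableAt ℝ h P)
    (hk : DifferentiableAt ℝ k P) :
    JD f (fun Q => g Q + h Q + c * k Q) P = JD f g P + JD f h P + c * JD f k P := by
  simp only [JD]
  rw [Dv_lin3 hg hh hk e2, Dv_lin3 hg hh hk e3]
  ring
lemma Dv_lin2 (hg : DifferentiableAt ℝ g P) (hk : DifferentiableAt ℝ k P) (a : P3) :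
    Dv a (fun Q => -(g Q + c * k Q)) P = -(Dv a g P + c * Dv a k P) := by
  rw [show (fun Q => -(g Q + c * k Q)) = (fun Q => -((fun R => g R + c * k R) Q)) from rfl,
    Dv_neg, Dv_add hg (hk.const_mul c), Dv_const_mul hk]

lemma JD_lin2 (hg : DifferentiableAt ℝ g P) (hk : DifferentiableAt ℝ k P) :
    JD f (fun Q => -(g Q + c * k Q)) P = -(JD f g P + c * JD f k P) := by
  simp only [JD]
  rw [Dv_lin2 hg hk e2, Dv_lin2 hg hk e3]
  ring

lemma JD_sub_left (hg : DifferentiableAt ℝ g P) (hh : DifferentiableAt ℝ h P) :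
    JD (fun Q => g Q - h Q) f P = JD g f P - JD h f P := by
  simp only [JD]
  rw [Dv_sub hg hh, Dv_sub (a := e3) hg hh]
  ring

lemma ED_sub (hg : DifferentiableAt ℝ g P) (hh : DifferentiableAt ℝ h P) :
    ED (fun Q => g Q - h Q) P = ED g P - ED h P := by
  simp only [ED]
  rw [Dv_sub hg hh, Dv_sub (a := e3) hg hh]
  ring

lemma JD_neg_right : JD f (fun Q => -g Q) P = -JD f g P := by
  simp only [JD, Dv_neg]; ring

end structural

end IMHDaux

open IMHDaux in
theorem imhd_first_covering_compatibility
    (u v s : ℝ × ℝ × ℝ → ℝ) (l : ℝ)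
    (hu : ContDiff ℝ (⊤ : ℕ∞) u) (hv : ContDiff ℝ (⊤ : ℕ∞) v) (hs : ContDiff ℝ (⊤ : ℕ∞) s)
    (hst : ∀ P, pt3 s P = J3 u s P + lap3 v P + l * Eop3 u P)
    (hsz : ∀ P, (0 : ℝ) = J3 v s P + lap3 u P + l * Eop3 v P) :
    ∀ P, G1 u v P + J3 (G2 u v) s P + l * Eop3 (G2 u v) P = 0 := by
  intro P
  -- differentiability facts
  have dJvs := fun Q => (contDiff_JD hv hs).differentiable (by simp) Q
  have dEv := fun Q => (contDiff_ED hv).differentiable (by simp) Q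
  have dEu := fun Q => (contDiff_ED hu).differentiable (by simp) Q
  have dJus := fun Q => (contDiff_JD hu hs).differentiable (by simp) Q
  have dLv := fun Q => (contDiff_LD hv).differentiable (by simp) Q
  have dJuv := fun Q => (contDiff_JD hu hv).differentiable (by simp) Q
  have dDtv := fun Q => diff_Dv hv e1 Q
  -- hypothesis conversions
  have hlap : LD u = fun Q => -(JD v s Q + l * ED v Q) := by
    funext Q
    have h0 := hsz Q
    rw [J3_eq hv hs, lap3_eq hu, Eop3_eq hv] at h0
    linarith
  have hpts : Dv e1 s = fun Q => JD u s Q + LD v Q + l * ED u Q := by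
    funext Q
    have h0 := hst Q
    rwa [pt3_eq hs, J3_eq hu hs, lap3_eq hv, Eop3_eq hu] at h0
  have hG2 : G2 u v = fun Q => Dv e1 v Q - JD u v Q := by
    funext Q
    simp only [G2]
    rw [pt3_eq hv, J3_eq hu hv]
  have hG2c : ContDiff ℝ (⊤ : ℕ∞) (fun Q => Dv e1 v Q - JD u v Q) :=
    (contDiff_Dv hv e1).sub (contDiff_JD hu hv)
  -- rewrite the goal into Dv-language
  simp only [G1]
  rw [lap3_eq hu, lap3_eq hv, hG2, pt3_eq (contDiff_LD hu),
    J3_eq hu (contDiff_LD hu), J3_eq hv (contDiff_LD hv),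
    J3_eq hG2c hs, Eop3_eq hG2c, hlap]
  -- key computations
  have h1 : Dv e1 (fun Q => -(JD v s Q + l * ED v Q)) P
      = -((JD (Dv e1 v) s P + (JD v (JD u s) P + JD v (LD v) P + l * JD v (ED u) P))
          + l * ED (Dv e1 v) P) := by
    rw [Dv_lin2 (dJvs P) (dEv P) e1, Dv_JD hv hs e1 P, hpts,
      JD_lin3 (dJus P) (dLv P) (dEu P), Dv_e1_ED hv P]
  have h2 : JD u (fun Q => -(JD v s Q + l * ED v Q)) P
      = -(JD u (JD v s) P + l * JD u (ED v) P) :=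
    JD_lin2 (dJvs P) (dEv P)
  have h3 : JD (fun Q => Dv e1 v Q - JD u v Q) s P
      = JD (Dv e1 v) s P - JD (JD u v) s P :=
    JD_sub_left (dDtv P) (dJuv P)
  have h4 : ED (fun Q => Dv e1 v Q - JD u v Q) P
      = ED (Dv e1 v) P - ED (JD u v) P :=
    ED_sub (dDtv P) (dJuv P)
  -- the two final identities
  have h5 : JD u (JD v s) P - JD v (JD u s) P - JD (JD u v) s P = 0 := by
    have hj := jacobiJD hu hv hs P
    have ha : JD s u = fun Q => -JD u s Q := by
      funext Q; exact JD_antisymm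
    have hb : JD v (JD s u) P = -JD v (JD u s) P := by
      rw [ha]; exact JD_neg_right
    have hc : JD s (JD u v) P = -JD (JD u v) s P := JD_antisymm
    rw [hb, hc] at hj
    linarith
  have h6 : -JD v (ED u) P + JD u (ED v) P - ED (JD u v) P = 0 := by
    have he := ED_JD hu hv P
    have hd : JD (ED u) v P = -JD v (ED u) P := JD_antisymm
    rw [hd] at he
    linarith
  rw [h1, h2, h3, h4]
  linear_combination h5 + l * h6
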